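/- arXiv:1506.00941 — 7 statements merged into one kernel-verified Lean document; each statement's English description precedes it below -/
import Mathlib

section
/- For n ≥ 5, in the braid group B_n with standard generators σ_1, …, σ_{n-1} (satisfying σ_i σ_{i+1} σ_i = σ_{i+1} σ_i σ_{i+1} and σ_i σ_j = σ_j σ_i for |i−j| ≥ 2), the commutator subgroup [B_n, B_n] is generated by the finite set S = {σ_i σ_{i+1}^{-1} : 1 ≤ i ≤ n−2}. -/
/-- The braid relations on generators indexed by `Fin (n-1)` (0-indexed: generator `i`
corresponds to the standard generator `σ_{i+1}`). -/
def braidRels (n : ℕ) : Set (FreeGroup (Fin (n - 1))) :=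
  {r | (∃ i j : Fin (n - 1), (i : ℕ) + 1 = (j : ℕ) ∧
          r = FreeGroup.of i * FreeGroup.of j * FreeGroup.of i *
              (FreeGroup.of j * FreeGroup.of i * FreeGroup.of j)⁻¹) ∨
       (∃ i j : Fin (n - 1), (i : ℕ) + 2 ≤ (j : ℕ) ∧
          r = FreeGroup.of i * FreeGroup.of j * (FreeGroup.of j * FreeGroup.of i)⁻¹)}

/-- The braid group `B_n`, presented by the standard generators and braid relations. -/
def BraidGroup (n : ℕ) : Type := PresentedGroup (braidRels n)

instance (n : ℕ) : Group (BraidGroup n) := by unfold BraidGroup; infer_instance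

/-- The standard generator `σ_{i+1}` of `B_n` (0-indexed). -/
def braidGen (n : ℕ) (i : Fin (n - 1)) : BraidGroup n := PresentedGroup.of i

/-!
Each `σᵢ σᵢ₊₁⁻¹` is the commutator `⁅σᵢ, σᵢ σᵢ₊₁⁆`, so `H := ⟨S⟩ ≤ [Bₙ, Bₙ]`. Conversely, once `H`
is normal, all generators have the same image in `Bₙ ⧸ H`, which is therefore cyclic, hence
abelian, so `[Bₙ, Bₙ] ≤ H`.

Telescoping gives `σᵢ σⱼ⁻¹ ∈ H` for all `i, j`. For far-apart `i, j` the generators commute, so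
also `σᵢ⁻¹ σⱼ = σⱼ σᵢ⁻¹ ∈ H`; when `n ≥ 5` every generator is far from the first or the last one,
which are far from each other, so `σᵢ⁻¹ σⱼ ∈ H` for all `i, j`. These two facts reduce conjugating
`σᵢ σᵢ₊₁⁻¹` by `σₖ^{±1}` to conjugating it by `σᵢ^{±1}`, where the braid relation gives
`σᵢ (σᵢ σᵢ₊₁⁻¹) σᵢ⁻¹ = (σᵢ σᵢ₊₁⁻¹)(σᵢ⁻¹ σᵢ₊₁)`.
-/

open scoped commutatorElement

section Group

variable {G : Type*} [Group G]

theorem commutatorElement_self_mul_of_braid {a b : G} (h : a * b * a = b * a * b) :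
    ⁅a, a * b⁆ = a * b⁻¹ := by
  calc ⁅a, a * b⁆ = a * b⁻¹ * (b * a * b) * (a * b * a)⁻¹ := by
        rw [commutatorElement_def]; group
    _ = a * b⁻¹ := by rw [h]; group

theorem conj_mul_inv_of_braid {a b : G} (h : a * b * a = b * a * b) :
    a * (a * b⁻¹) * a⁻¹ = a * b⁻¹ * (a⁻¹ * b) := by
  calc a * (a * b⁻¹) * a⁻¹ = a * b⁻¹ * (a⁻¹ * b) * b⁻¹ * (a * b * a) * (b * a * b)⁻¹ * b := by
        group
    _ = a * b⁻¹ * (a⁻¹ * b) := by rw [h]; group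

namespace Subgroup

theorem mem_normalizer_closure_of_conj_mem {s : Set G} {g : G}
    (h₁ : ∀ x ∈ s, g * x * g⁻¹ ∈ closure s) (h₂ : ∀ x ∈ s, g⁻¹ * x * g ∈ closure s) :
    g ∈ normalizer (closure s : Set G) := by
  rw [mem_normalizer_iff_map_conj_eq, MonoidHom.map_closure]
  refine le_antisymm ((closure_le _).2 ?_) ?_
  · rintro _ ⟨x, hx, rfl⟩
    exact h₁ x hx
  · rw [closure_le, ← MonoidHom.map_closure]
    exact fun x hx ↦ ⟨_, h₂ x hx, by simp [mul_assoc]⟩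

theorem commutator_le_of_closure_eq_top {H : Subgroup G} [H.Normal] {t : Set G}
    (ht : closure t = ⊤) (h : ∀ x ∈ t, ∀ y ∈ t, ⁅x, y⁆ ∈ H) : _root_.commutator G ≤ H := by
  rw [← QuotientGroup.ker_mk' H, ← map_eq_bot_iff, _root_.commutator_def, map_commutator, ← ht,
    MonoidHom.map_closure, commutator_eq_bot_iff_le_centralizer, centralizer_closure, closure_le]
  rintro _ ⟨x, hx, rfl⟩ _ ⟨y, hy, rfl⟩
  rw [← commutatorElement_eq_one_iff_mul_comm, ← map_commutatorElement, QuotientGroup.mk'_apply,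
    QuotientGroup.eq_one_iff]
  exact h y hy x hx

end Subgroup

end Group

theorem Fin.apply_eq_apply_of_forall_succ {α : Type*} {m : ℕ} {f : Fin m → α}
    (h : ∀ i j : Fin m, (i : ℕ) + 1 = j → f i = f j) (i j : Fin m) : f i = f j := by
  suffices key : ∀ k (hk : k < m), f ⟨k, hk⟩ = f ⟨0, by omega⟩ from
    (key i i.2).trans (key j j.2).symm
  intro k
  induction k with
  | zero => exact fun _ ↦ rfl
  | succ k ih => exact fun hk ↦ (h ⟨k, by omega⟩ ⟨k + 1, hk⟩ rfl).symm.trans (ih _)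

namespace BraidGroup

open Subgroup

variable {n : ℕ}

local notation "σ" => braidGen _

theorem braidGen_braid {i j : Fin (n - 1)} (h : (i : ℕ) + 1 = j) :
    σ i * σ j * σ i = σ j * σ i * σ j := by
  have := PresentedGroup.mk_eq_mk_of_mul_inv_mem (rels := braidRels n)
    (x := .of i * .of j * .of i) (y := .of j * .of i * .of j) (Or.inl ⟨i, j, h, rfl⟩)
  simp only [map_mul] at this
  exact this

theorem braidGen_commute {i j : Fin (n - 1)} (h : (i : ℕ) + 2 ≤ j) : Commute (σ i) (σ j) := by
  have := PresentedGroup.mk_eq_mk_of_mul_inv_mem (rels := braidRels n)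
    (x := .of i * .of j) (y := .of j * .of i) (Or.inr ⟨i, j, h, rfl⟩)
  simp only [map_mul] at this
  exact this

theorem closure_range_braidGen : closure (Set.range (braidGen n)) = ⊤ :=
  PresentedGroup.closure_range_of _

def adjacentMulInv (n : ℕ) : Set (BraidGroup n) :=
  {x | ∃ i j : Fin (n - 1), (i : ℕ) + 1 = j ∧ x = σ i * (σ j)⁻¹}

theorem mul_inv_mem_closure_adjacentMulInv (i j : Fin (n - 1)) :
    σ i * (σ j)⁻¹ ∈ closure (adjacentMulInv n) := by
  let f (k : Fin (n - 1)) : BraidGroup n ⧸ closure (adjacentMulInv n) := ((σ k)⁻¹ : BraidGroup n)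
  have adjacent (k l : Fin (n - 1)) (hkl : (k : ℕ) + 1 = l) : f k = f l :=
    QuotientGroup.eq.2 (by simpa using subset_closure (k := adjacentMulInv n) ⟨k, l, hkl, rfl⟩)
  simpa using QuotientGroup.eq.1 (Fin.apply_eq_apply_of_forall_succ adjacent i j)

theorem inv_mul_mem_closure_adjacentMulInv_of_far {i j : Fin (n - 1)}
    (h : (i : ℕ) + 2 ≤ j ∨ (j : ℕ) + 2 ≤ i) : (σ i)⁻¹ * σ j ∈ closure (adjacentMulInv n) := by
  have hij : Commute (σ i) (σ j) :=
    h.elim braidGen_commute fun h ↦ (braidGen_commute h).symm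
  rw [hij.inv_left.eq]
  exact mul_inv_mem_closure_adjacentMulInv j i

theorem inv_mul_mem_closure_adjacentMulInv (hn : 5 ≤ n) (i j : Fin (n - 1)) :
    (σ i)⁻¹ * σ j ∈ closure (adjacentMulInv n) := by
  let f (k : Fin (n - 1)) : BraidGroup n ⧸ closure (adjacentMulInv n) := σ k
  have far (k l : Fin (n - 1)) (h : (k : ℕ) + 2 ≤ l) : f k = f l :=
    QuotientGroup.eq.2 (inv_mul_mem_closure_adjacentMulInv_of_far (.inl h))
  let first : Fin (n - 1) := ⟨0, by omega⟩
  let last : Fin (n - 1) := ⟨n - 2, by omega⟩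
  have eq_first (k : Fin (n - 1)) : f k = f first := by
    obtain hk | hk | hk : (k : ℕ) = 0 ∨ (k : ℕ) = 1 ∨ 2 ≤ (k : ℕ) := by omega
    · rw [show k = first from Fin.ext hk]
    · exact (far k last (by simp [last]; omega)).trans
        (far first last (by simp [first, last]; omega)).symm
    · exact (far first k hk).symm
  exact QuotientGroup.eq.1 ((eq_first i).trans (eq_first j).symm)

theorem conj_mem_closure_adjacentMulInv (hn : 5 ≤ n) (k : Fin (n - 1)) {x : BraidGroup n}
    (hx : x ∈ adjacentMulInv n) : σ k * x * (σ k)⁻¹ ∈ closure (adjacentMulInv n) := by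
  obtain ⟨i, j, hij, rfl⟩ := hx
  have hconj : σ k * (σ i * (σ j)⁻¹) * (σ k)⁻¹ =
      (σ k * (σ i)⁻¹) * (σ i * (σ i * (σ j)⁻¹) * (σ i)⁻¹) * (σ k * (σ i)⁻¹)⁻¹ := by
    group
  rw [hconj, conj_mul_inv_of_braid (braidGen_braid hij)]
  have hki := mul_inv_mem_closure_adjacentMulInv k i
  exact mul_mem (mul_mem hki (mul_mem (mul_inv_mem_closure_adjacentMulInv i j)
    (inv_mul_mem_closure_adjacentMulInv hn i j))) (inv_mem hki)

theorem inv_conj_mem_closure_adjacentMulInv (hn : 5 ≤ n) (k : Fin (n - 1)) {x : BraidGroup n}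
    (hx : x ∈ adjacentMulInv n) : (σ k)⁻¹ * x * σ k ∈ closure (adjacentMulInv n) := by
  obtain ⟨i, j, -, rfl⟩ := hx
  have hconj : (σ k)⁻¹ * (σ i * (σ j)⁻¹) * σ k =
      ((σ k)⁻¹ * σ i) * ((σ j)⁻¹ * σ i) * ((σ k)⁻¹ * σ i)⁻¹ := by
    group
  rw [hconj]
  have hki := inv_mul_mem_closure_adjacentMulInv hn k i
  exact mul_mem (mul_mem hki (inv_mul_mem_closure_adjacentMulInv hn j i)) (inv_mem hki)

theorem closure_adjacentMulInv_normal (hn : 5 ≤ n) : (closure (adjacentMulInv n)).Normal := by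
  rw [← normalizer_eq_top_iff, eq_top_iff, ← closure_range_braidGen, closure_le]
  rintro _ ⟨k, rfl⟩
  exact mem_normalizer_closure_of_conj_mem (fun _ ↦ conj_mem_closure_adjacentMulInv hn k)
    (fun _ ↦ inv_conj_mem_closure_adjacentMulInv hn k)

theorem closure_adjacentMulInv_le_commutator :
    closure (adjacentMulInv n) ≤ commutator (BraidGroup n) := by
  rw [closure_le]
  rintro _ ⟨i, j, hij, rfl⟩
  rw [← commutatorElement_self_mul_of_braid (braidGen_braid hij), commutator_def]
  exact commutator_mem_commutator (mem_top _) (mem_top _)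

theorem commutator_le_closure_adjacentMulInv (hn : 5 ≤ n) :
    commutator (BraidGroup n) ≤ closure (adjacentMulInv n) := by
  have := closure_adjacentMulInv_normal hn
  refine commutator_le_of_closure_eq_top closure_range_braidGen ?_
  rintro _ ⟨i, rfl⟩ _ ⟨j, rfl⟩
  have hcomm : ⁅σ i, σ j⁆ = σ i * (σ j * (σ i)⁻¹) * (σ i)⁻¹ * (σ i * (σ j)⁻¹) := by
    rw [commutatorElement_def]; group
  rw [hcomm]
  exact mul_mem (this.conj_mem _ (mul_inv_mem_closure_adjacentMulInv j i) _)
    (mul_inv_mem_closure_adjacentMulInv i j)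

end BraidGroup

/-- For `n ≥ 5`, the commutator subgroup `[B_n, B_n]` is generated by the set
`S = {σ_i σ_{i+1}⁻¹ : 1 ≤ i ≤ n-2}`. -/
theorem braid_commutator_eq_closure (n : ℕ) (hn : 5 ≤ n) :
    Subgroup.closure {x : BraidGroup n | ∃ i j : Fin (n - 1), (i : ℕ) + 1 = (j : ℕ) ∧
        x = braidGen n i * (braidGen n j)⁻¹} = commutator (BraidGroup n) :=
  le_antisymm BraidGroup.closure_adjacentMulInv_le_commutator
    (BraidGroup.commutator_le_closure_adjacentMulInv hn)
end

section
/- For n ≥ 5, in the braid group B_n, the elements σ_i σ_{i+1}^{-1} (for 1 ≤ i ≤ n−2) are all mutually conjugate by elements of the commutator subgroup [B_n, B_n]; in particular, for each i, the element σ_i σ_{i+1} σ_{i+2} σ_{i+3}^{-3} lies in [B_n, B_n] and conjugates σ_i σ_{i+1}^{-1} to σ_{i+1} σ_{i+2}^{-1}. -/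
lemma braid_rel_one (n : ℕ) {r : FreeGroup (Fin (n-1))} (hr : r ∈ braidRels n) :
    (PresentedGroup.mk (braidRels n) r : BraidGroup n) = 1 :=
  (QuotientGroup.eq_one_iff r).mpr (Subgroup.subset_normalClosure hr)

lemma braid_braid (n : ℕ) (i j : Fin (n-1)) (h : (i : ℕ) + 1 = (j : ℕ)) :
    braidGen n i * braidGen n j * braidGen n i = braidGen n j * braidGen n i * braidGen n j := by
  have h1 := braid_rel_one n (Or.inl ⟨i, j, h, rfl⟩)
  rw [map_mul, map_mul, map_mul, map_inv, map_mul, map_mul] at h1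
  rw [mul_inv_eq_one] at h1
  exact h1

lemma braid_comm (n : ℕ) (i j : Fin (n-1)) (h : (i : ℕ) + 2 ≤ (j : ℕ)) :
    braidGen n i * braidGen n j = braidGen n j * braidGen n i := by
  have h1 := braid_rel_one n (Or.inr ⟨i, j, h, rfl⟩)
  rw [map_mul, map_inv, map_mul, map_mul] at h1
  rw [mul_inv_eq_one] at h1
  exact h1

lemma key_conj {G : Type*} [Group G] (a b c d : G)
    (h1 : a*b*a = b*a*b) (h2 : b*c*b = c*b*c)
    (hac : a*c = c*a) (had : a*d = d*a) (hbd : b*d = d*b) :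
    (a*b*c*d^(-3:ℤ)) * (a*b⁻¹) * (a*b*c*d^(-3:ℤ))⁻¹ = b*c⁻¹ := by
  have hC : (a*b⁻¹) * d^(-3:ℤ) = d^(-3:ℤ) * (a*b⁻¹) :=
    (((show Commute a d from had).mul_left (show Commute b d from hbd).inv_left).zpow_right
      (-3)).eq
  have e1 : c * b⁻¹ * c⁻¹ = b⁻¹ * c⁻¹ * b := by
    have h := congrArg (fun x => c * x⁻¹ * b) h2
    simpa [mul_assoc, mul_inv_rev] using h
  have hd : d^(-3:ℤ) * (a*b⁻¹) * d^(3:ℤ) = a * b⁻¹ := by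
    rw [← hC]; group
  calc (a*b*c*d^(-3:ℤ)) * (a*b⁻¹) * (a*b*c*d^(-3:ℤ))⁻¹
      = a*b*c*(d^(-3:ℤ)*(a*b⁻¹)*d^(3:ℤ))*(c⁻¹*b⁻¹*a⁻¹) := by group
    _ = a*b*c*(a*b⁻¹)*(c⁻¹*b⁻¹*a⁻¹) := by rw [hd]
    _ = a*b*(c*a)*(b⁻¹*c⁻¹)*(b⁻¹*a⁻¹) := by group
    _ = a*b*(a*c)*(b⁻¹*c⁻¹)*(b⁻¹*a⁻¹) := by rw [← hac]
    _ = a*b*a*(c*b⁻¹*c⁻¹)*(b⁻¹*a⁻¹) := by group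
    _ = a*b*a*(b⁻¹*c⁻¹*b)*(b⁻¹*a⁻¹) := by rw [e1]
    _ = (a*b*a)*(b⁻¹*(c⁻¹*a⁻¹)) := by group
    _ = (b*a*b)*(b⁻¹*(a⁻¹*c⁻¹)) := by rw [h1, ← mul_inv_rev, hac, mul_inv_rev]
    _ = b*c⁻¹ := by group

lemma mem_commutator_of_abel {G : Type*} [Group G] (x : G)
    (h : Abelianization.of x = 1) : x ∈ commutator G :=
  (QuotientGroup.eq_one_iff x).mp h

lemma abel_eq_of_braid {G : Type*} [Group G] (x y : G)
    (h : x * y * x = y * x * y) :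
    Abelianization.of x = Abelianization.of y := by
  have h' := congrArg Abelianization.of h
  simp only [map_mul] at h'
  set X := Abelianization.of x
  set Y := Abelianization.of y
  have : X * (X * Y) = Y * (X * Y) := by
    calc X * (X * Y) = X * (Y * X) := by rw [mul_comm X Y]
    _ = X * Y * X := by group
    _ = Y * X * Y := h'
    _ = Y * (X * Y) := by group
  exact mul_right_cancel this

lemma abel_gen_eq (n : ℕ) (i j : Fin (n-1)) :
    Abelianization.of (braidGen n i) = Abelianization.of (braidGen n j) := by
  have h0 : 0 < n - 1 := lt_of_le_of_lt (Nat.zero_le _) i.isLt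
  suffices H : ∀ k (hk : k < n - 1),
      Abelianization.of (braidGen n ⟨k, hk⟩) = Abelianization.of (braidGen n ⟨0, h0⟩) by
    have hi := H i i.isLt
    have hj := H j j.isLt
    simp only [Fin.eta] at hi hj
    rw [hi, hj]
  intro k
  induction k with
  | zero => intro hk; rfl
  | succ m ih =>
    intro hk
    have hm : m < n - 1 := Nat.lt_of_succ_lt hk
    have hb := braid_braid n ⟨m, hm⟩ ⟨m+1, hk⟩ rfl
    rw [← abel_eq_of_braid _ _ hb]
    exact ih hm

lemma conjugator_mem (n : ℕ) (p q r s : Fin (n-1)) :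
    braidGen n p * braidGen n q * braidGen n r * (braidGen n s)^(-3:ℤ) ∈
      commutator (BraidGroup n) := by
  apply mem_commutator_of_abel
  rw [map_mul, map_mul, map_mul, map_zpow]
  rw [abel_gen_eq n p s, abel_gen_eq n q s, abel_gen_eq n r s]
  group

lemma step_up (n : ℕ) (i i1 i2 i3 : Fin (n-1)) (h1 : (i:ℕ)+1 = i1) (h2 : (i:ℕ)+2 = i2)
    (h3 : (i:ℕ)+3 = i3) :
    (braidGen n i * braidGen n i1 * braidGen n i2 * (braidGen n i3)^(-3:ℤ)) *
      (braidGen n i * (braidGen n i1)⁻¹) *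
      (braidGen n i * braidGen n i1 * braidGen n i2 * (braidGen n i3)^(-3:ℤ))⁻¹ =
    braidGen n i1 * (braidGen n i2)⁻¹ := by
  exact key_conj _ _ _ _ (braid_braid n i i1 h1) (braid_braid n i1 i2 (by omega))
    (braid_comm n i i2 (by omega)) (braid_comm n i i3 (by omega))
    (braid_comm n i1 i3 (by omega))

lemma step_down (n : ℕ) (e a b c : Fin (n-1)) (he : (e:ℕ)+1 = a) (ha : (a:ℕ)+1 = b)
    (hb : (b:ℕ)+1 = c) :
    (braidGen n c * braidGen n b * braidGen n a * (braidGen n e)^(-3:ℤ)) *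
      (braidGen n b * (braidGen n c)⁻¹) *
      (braidGen n c * braidGen n b * braidGen n a * (braidGen n e)^(-3:ℤ))⁻¹ =
    braidGen n a * (braidGen n b)⁻¹ := by
  have k := key_conj (braidGen n c) (braidGen n b) (braidGen n a) (braidGen n e)
    (braid_braid n b c hb).symm (braid_braid n a b ha).symm
    (braid_comm n a c (by omega)).symm (braid_comm n e c (by omega)).symm
    (braid_comm n e b (by omega)).symm
  set g := braidGen n c * braidGen n b * braidGen n a * (braidGen n e)^(-3:ℤ) with hg
  calc g * (braidGen n b * (braidGen n c)⁻¹) * g⁻¹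
      = (g * (braidGen n c * (braidGen n b)⁻¹) * g⁻¹)⁻¹ := by group
    _ = (braidGen n b * (braidGen n a)⁻¹)⁻¹ := by rw [k]
    _ = braidGen n a * (braidGen n b)⁻¹ := by group

/-- For `n ≥ 5`, the elements `σ_i σ_{i+1}⁻¹` are all mutually conjugate by elements of the
commutator subgroup `[B_n, B_n]`; in particular `σ_i σ_{i+1} σ_{i+2} σ_{i+3}⁻³` lies in
`[B_n, B_n]` and conjugates `σ_i σ_{i+1}⁻¹` to `σ_{i+1} σ_{i+2}⁻¹`. -/
theorem braid_mutually_conjugate (n : ℕ) (hn : 5 ≤ n) :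
    (∀ i j i' j' : Fin (n - 1), (i : ℕ) + 1 = (j : ℕ) → (i' : ℕ) + 1 = (j' : ℕ) →
      ∃ h ∈ commutator (BraidGroup n),
        h * (braidGen n i * (braidGen n j)⁻¹) * h⁻¹ = braidGen n i' * (braidGen n j')⁻¹) ∧
    (∀ i i1 i2 i3 : Fin (n - 1), (i : ℕ) + 1 = (i1 : ℕ) → (i : ℕ) + 2 = (i2 : ℕ) →
      (i : ℕ) + 3 = (i3 : ℕ) →
      braidGen n i * braidGen n i1 * braidGen n i2 * (braidGen n i3) ^ (-3 : ℤ) ∈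
          commutator (BraidGroup n) ∧
        (braidGen n i * braidGen n i1 * braidGen n i2 * (braidGen n i3) ^ (-3 : ℤ)) *
            (braidGen n i * (braidGen n i1)⁻¹) *
            (braidGen n i * braidGen n i1 * braidGen n i2 * (braidGen n i3) ^ (-3 : ℤ))⁻¹ =
          braidGen n i1 * (braidGen n i2)⁻¹) := by
  have h4 : 4 ≤ n - 1 := by omega
  constructor
  · -- part 1
    have main : ∀ k (hk : k + 1 < n - 1) (hk' : k < n - 1),
        ∃ g ∈ commutator (BraidGroup n),
          g * (braidGen n ⟨0, by omega⟩ * (braidGen n ⟨1, by omega⟩)⁻¹) * g⁻¹ =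
            braidGen n ⟨k, hk'⟩ * (braidGen n ⟨k+1, hk⟩)⁻¹ := by
      intro k
      induction k with
      | zero => intro hk hk'; exact ⟨1, one_mem _, by simp⟩
      | succ m ih =>
        intro hk hk'
        obtain ⟨g, hgm, hge⟩ := ih (Nat.lt_of_succ_lt hk) (Nat.lt_of_succ_lt hk')
        cases m with
        | zero =>
          have hu := step_up n ⟨0, by omega⟩ ⟨1, by omega⟩ ⟨2, by omega⟩ ⟨3, by omega⟩
            rfl rfl rfl
          set u := braidGen n ⟨0, by omega⟩ * braidGen n ⟨1, by omega⟩ *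
            braidGen n ⟨2, by omega⟩ * (braidGen n ⟨3, by omega⟩)^(-3:ℤ) with hu'
          refine ⟨u * g, mul_mem (conjugator_mem n _ _ _ _) hgm, ?_⟩
          calc u * g * (braidGen n ⟨0, by omega⟩ * (braidGen n ⟨1, by omega⟩)⁻¹) * (u * g)⁻¹
              = u * (g * (braidGen n ⟨0, by omega⟩ * (braidGen n ⟨1, by omega⟩)⁻¹) * g⁻¹)
                * u⁻¹ := by group
            _ = u * (braidGen n ⟨0, Nat.lt_of_succ_lt hk'⟩ *
                (braidGen n ⟨1, Nat.lt_of_succ_lt hk⟩)⁻¹) * u⁻¹ := by rw [hge]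
            _ = braidGen n ⟨1, hk'⟩ * (braidGen n ⟨2, hk⟩)⁻¹ := hu
        | succ m' =>
          have hv := step_down n ⟨m', by omega⟩ ⟨m'+1, by omega⟩ ⟨m'+1+1, by omega⟩
            ⟨m'+1+1+1, by omega⟩ rfl rfl rfl
          set v := braidGen n ⟨m'+1+1+1, by omega⟩ * braidGen n ⟨m'+1+1, by omega⟩ *
            braidGen n ⟨m'+1, by omega⟩ * (braidGen n ⟨m', by omega⟩)^(-3:ℤ) with hv'
          have hvm : v⁻¹ ∈ commutator (BraidGroup n) :=
            inv_mem (conjugator_mem n _ _ _ _)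
          have hv2 : v⁻¹ * (braidGen n ⟨m'+1, by omega⟩ * (braidGen n ⟨m'+1+1, by omega⟩)⁻¹)
              * v = braidGen n ⟨m'+1+1, by omega⟩ * (braidGen n ⟨m'+1+1+1, by omega⟩)⁻¹ := by
            rw [← hv]; group
          refine ⟨v⁻¹ * g, mul_mem hvm hgm, ?_⟩
          calc v⁻¹ * g * (braidGen n ⟨0, by omega⟩ * (braidGen n ⟨1, by omega⟩)⁻¹) *
              (v⁻¹ * g)⁻¹
              = v⁻¹ * (g * (braidGen n ⟨0, by omega⟩ * (braidGen n ⟨1, by omega⟩)⁻¹) * g⁻¹)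
                * v := by group
            _ = v⁻¹ * (braidGen n ⟨m'+1, Nat.lt_of_succ_lt hk'⟩ *
                (braidGen n ⟨m'+1+1, Nat.lt_of_succ_lt hk⟩)⁻¹) * v := by rw [hge]
            _ = braidGen n ⟨m'+1+1, hk'⟩ * (braidGen n ⟨m'+1+1+1, hk⟩)⁻¹ := hv2
    intro i j i' j' hij hij'
    obtain ⟨iv, hiv⟩ := i
    obtain ⟨jv, hjv⟩ := j
    obtain ⟨iv', hiv'⟩ := i'
    obtain ⟨jv', hjv'⟩ := j'
    simp only [Fin.val_mk] at hij hij'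
    subst hij; subst hij'
    obtain ⟨g1, hg1m, hg1e⟩ := main iv hjv hiv
    obtain ⟨g2, hg2m, hg2e⟩ := main iv' hjv' hiv'
    refine ⟨g2 * g1⁻¹, mul_mem hg2m (inv_mem hg1m), ?_⟩
    have h1' : g1⁻¹ * (braidGen n ⟨iv, hiv⟩ * (braidGen n ⟨iv+1, hjv⟩)⁻¹) * g1 =
        braidGen n ⟨0, by omega⟩ * (braidGen n ⟨1, by omega⟩)⁻¹ := by
      rw [← hg1e]; group
    calc g2 * g1⁻¹ * (braidGen n ⟨iv, hiv⟩ * (braidGen n ⟨iv+1, hjv⟩)⁻¹) * (g2 * g1⁻¹)⁻¹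
        = g2 * (g1⁻¹ * (braidGen n ⟨iv, hiv⟩ * (braidGen n ⟨iv+1, hjv⟩)⁻¹) * g1) * g2⁻¹ := by
          group
      _ = g2 * (braidGen n ⟨0, by omega⟩ * (braidGen n ⟨1, by omega⟩)⁻¹) * g2⁻¹ := by rw [h1']
      _ = braidGen n ⟨iv', hiv'⟩ * (braidGen n ⟨iv'+1, hjv'⟩)⁻¹ := hg2e
  · intro i i1 i2 i3 h1 h2 h3
    exact ⟨conjugator_mem n i i1 i2 i3, step_up n i i1 i2 i3 h1 h2 h3⟩
end

section
/- For n ≥ 5, in the braid group B_n, if j is an index with |j−i| ≥ 2 and |j−(i+1)| ≥ 2 (so σ_j commutes with both σ_i and σ_{i+1}), then σ_i σ_{i+1}^{-1} equals the commutator [σ_{i+1} σ_i σ_j^{-2}, σ_{i+1} σ_j^{-1}]. -/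
open scoped commutatorElement

/-! Since `σ_j` commutes with `σ_i` and `σ_{i+1}`, the powers of `σ_j` drop out of the
commutator, which leaves `[σ_{i+1} σ_i, σ_{i+1}] = σ_{i+1} σ_i σ_{i+1} σ_i⁻¹ σ_{i+1}⁻²`;
the braid relation turns `σ_{i+1} σ_i σ_{i+1}` into `σ_i σ_{i+1} σ_i`, and this collapses
to `σ_i σ_{i+1}⁻¹`. -/

theorem commutatorElement_mul_mul_of_commute {G : Type*} [Group G] {x y c d : G}
    (hcy : Commute c y) (hcd : Commute c d) (hdx : Commute d x) :
    ⁅x * c, y * d⁆ = ⁅x, y⁆ := by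
  calc ⁅x * c, y * d⁆ = x * (c * (y * d)) * c⁻¹ * x⁻¹ * d⁻¹ * y⁻¹ := by group
    _ = x * y * (d * x⁻¹) * d⁻¹ * y⁻¹ := by rw [(hcy.mul_right hcd).eq]; group
    _ = ⁅x, y⁆ := by rw [hdx.inv_right.eq]; group

theorem commutatorElement_mul_self_of_braid {G : Type*} [Group G] {a b : G}
    (hab : a * b * a = b * a * b) :
    ⁅b * a, b⁆ = a * b⁻¹ := by
  calc ⁅b * a, b⁆ = b * a * b * a⁻¹ * b⁻¹ * b⁻¹ := by group
    _ = a * b⁻¹ := by rw [← hab]; group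

theorem braidGen_braid {n : ℕ} (i j : Fin (n - 1)) (h : (i : ℕ) + 1 = j) :
    braidGen n i * braidGen n j * braidGen n i = braidGen n j * braidGen n i * braidGen n j := by
  have hrel := PresentedGroup.mk_eq_mk_of_mul_inv_mem (rels := braidRels n) (Or.inl ⟨i, j, h, rfl⟩)
  simp only [map_mul] at hrel
  exact hrel

theorem braidGen_commute {n : ℕ} (i j : Fin (n - 1)) (h : (i : ℕ) + 2 ≤ j) :
    Commute (braidGen n i) (braidGen n j) := by
  have hrel := PresentedGroup.mk_eq_mk_of_mul_inv_mem (rels := braidRels n) (Or.inr ⟨i, j, h, rfl⟩)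
  simp only [map_mul] at hrel
  exact hrel

theorem braidGen_commute_of_two_le_dist {n : ℕ} {i j : Fin (n - 1)}
    (h : (i : ℕ) + 2 ≤ j ∨ (j : ℕ) + 2 ≤ i) : Commute (braidGen n i) (braidGen n j) :=
  h.elim (braidGen_commute i j) fun h ↦ (braidGen_commute j i h).symm

theorem braid_commutator_formula_general (n : ℕ)
    (i i1 j : Fin (n - 1)) (h1 : (i : ℕ) + 1 = (i1 : ℕ))
    (hj : (j : ℕ) + 2 ≤ (i : ℕ) ∨ (i : ℕ) + 3 ≤ (j : ℕ)) :
    braidGen n i * (braidGen n i1)⁻¹ =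
      ⁅braidGen n i1 * braidGen n i * (braidGen n j)⁻¹ * (braidGen n j)⁻¹,
        braidGen n i1 * (braidGen n j)⁻¹⁆ := by
  have hab := braidGen_braid i i1 h1
  have hca : Commute (braidGen n j) (braidGen n i) :=
    braidGen_commute_of_two_le_dist (by omega)
  have hcb : Commute (braidGen n j) (braidGen n i1) :=
    braidGen_commute_of_two_le_dist (by omega)
  rw [mul_assoc _ (braidGen n j)⁻¹, commutatorElement_mul_mul_of_commute
      (hcb.inv_left.mul_left hcb.inv_left) ((Commute.refl _).mul_left (Commute.refl _))
      (hcb.mul_right hca).inv_left, commutatorElement_mul_self_of_braid hab]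

/-- For `n ≥ 5`, if `σ_j` commutes with both `σ_i` and `σ_{i+1}` (i.e. `|j-i| ≥ 2` and
`|j-(i+1)| ≥ 2`), then `σ_i σ_{i+1}⁻¹ = [σ_{i+1} σ_i σ_j⁻², σ_{i+1} σ_j⁻¹]`. -/
theorem braid_commutator_formula (n : ℕ) (hn : 5 ≤ n)
    (i i1 j : Fin (n - 1)) (h1 : (i : ℕ) + 1 = (i1 : ℕ))
    (hj : (j : ℕ) + 2 ≤ (i : ℕ) ∨ (i : ℕ) + 3 ≤ (j : ℕ)) :
    braidGen n i * (braidGen n i1)⁻¹ =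
      ⁅braidGen n i1 * braidGen n i * (braidGen n j)⁻¹ * (braidGen n j)⁻¹,
        braidGen n i1 * (braidGen n j)⁻¹⁆ :=
  braid_commutator_formula_general n i i1 j h1 hj
end

section
/- For n ≥ 5, the commutator subgroup [B_n, B_n] of the braid group B_n is perfect, i.e., [[B_n,B_n],[B_n,B_n]] = [B_n,B_n]. -/
/-!
Let `N = ⁅G', G'⁆` and `Q = G ⧸ N`, so that `Q'` is abelian. Braided generators
`x y x = y x y` satisfy `y x⁻¹ = ⁅x y, x⁆ ∈ G'`. For four consecutive generators `a, b, c, d`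
write `c = (c a⁻¹) a` with `c a⁻¹ ∈ Q'`: both factors commute with `d c⁻¹ ∈ Q'` (the second
because `a` commutes with `c` and `d`), so `c` and `d` commute in `Q`, and commuting braided
elements are equal. Hence all generators coincide in `Q`, so `Q` is abelian, i.e. `G' ≤ N`.
-/

open scoped commutatorElement

section Braided

variable {G : Type*} [Group G] {x y : G}

theorem Commute.eq_of_braid (hc : Commute x y) (hb : x * y * x = y * x * y) : x = y :=
  mul_left_cancel (a := x * y) (by rw [hb, hc.eq])

theorem mul_inv_mem_commutator_of_braid (hb : x * y * x = y * x * y) :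
    y * x⁻¹ ∈ commutator G := by
  have h : y * x⁻¹ = ⁅x * y, x⁆ := by
    rw [commutatorElement_def, hb]
    group
  rw [h]
  exact Subgroup.commutator_mem_commutator (Subgroup.mem_top _) (Subgroup.mem_top _)

theorem eq_of_braid_chain (hG : ⁅commutator G, commutator G⁆ = ⊥) {a b c d : G}
    (hab : a * b * a = b * a * b) (hbc : b * c * b = c * b * c) (hcd : c * d * c = d * c * d)
    (hac : Commute a c) (had : Commute a d) (hbd : Commute b d) :
    a = b ∧ b = c ∧ c = d := by
  have hs : d * c⁻¹ ∈ commutator G := mul_inv_mem_commutator_of_braid hcd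
  have ht : c * a⁻¹ ∈ commutator G := by
    simpa [mul_assoc] using Subgroup.mul_mem _
      (mul_inv_mem_commutator_of_braid hbc) (mul_inv_mem_commutator_of_braid hab)
  have hts : Commute (c * a⁻¹) (d * c⁻¹) := by
    have h := Subgroup.commutator_mem_commutator ht hs
    rwa [hG, Subgroup.mem_bot, commutatorElement_eq_one_iff_commute] at h
  have hcs : Commute c (d * c⁻¹) := by
    simpa using hts.mul_left (had.mul_right hac.inv_right)
  have hcd' : c = d :=
    (by simpa using hcs.mul_right (Commute.refl c) : Commute c d).eq_of_braid hcd
  have hbc' : b = c := (hcd' ▸ hbd).eq_of_braid hbc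
  exact ⟨(hbc' ▸ hac).eq_of_braid hab, hbc', hcd'⟩

end Braided

theorem commutator_eq_bot_of_closure_eq_top {G : Type*} [Group G] {s : Set G}
    (hs : Subgroup.closure s = ⊤) (hcomm : ∀ x ∈ s, ∀ y ∈ s, Commute x y) :
    commutator G = ⊥ := by
  have h : Subgroup.closure s ≤ Subgroup.centralizer s :=
    (Subgroup.closure_le _).2 fun x hx y hy => (hcomm x hx y hy).symm
  rw [commutator_eq_bot_iff_center_eq_top, eq_top_iff, ← Subgroup.centralizer_univ,
    ← Subgroup.coe_top, ← hs, Subgroup.centralizer_closure]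
  exact h

theorem map_commutator_of_surjective {G H : Type*} [Group G] [Group H] {f : G →* H}
    (hf : Function.Surjective f) : (commutator G).map f = commutator H := by
  rw [map_commutator_eq, f.range_eq_top_of_surjective hf]
  rfl

structure IsBraidFamily {G : Type*} [Group G] {m : ℕ} (a : Fin m → G) : Prop where
  braid : ∀ i j : Fin m, (i : ℕ) + 1 = j → a i * a j * a i = a j * a i * a j
  commute : ∀ i j : Fin m, (i : ℕ) + 2 ≤ j → Commute (a i) (a j)

namespace IsBraidFamily

variable {G : Type*} [Group G] {m : ℕ} {a : Fin m → G}

theorem map {H : Type*} [Group H] (h : IsBraidFamily a) (f : G →* H) :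
    IsBraidFamily (f ∘ a) where
  braid i j hij := by simp only [Function.comp_apply, ← map_mul, h.braid i j hij]
  commute i j hij := (h.commute i j hij).map f

theorem apply_eq_apply_of_succ_eq (h : IsBraidFamily a) (hG : ⁅commutator G, commutator G⁆ = ⊥) (hm : 4 ≤ m)
    {i j : Fin m} (hij : (i : ℕ) + 1 = j) : a i = a j := by
  obtain ⟨k, hk, hki, hik⟩ : ∃ k, k + 3 < m ∧ k ≤ i ∧ (i : ℕ) ≤ k + 2 :=
    ⟨min i (m - 4), by omega, by omega, by omega⟩
  let e : Fin 4 → Fin m := fun l => ⟨k + l, by omega⟩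
  obtain ⟨h01, h12, h23⟩ := eq_of_braid_chain hG (h.braid (e 0) (e 1) rfl)
    (h.braid (e 1) (e 2) rfl) (h.braid (e 2) (e 3) rfl) (h.commute (e 0) (e 2) le_rfl)
    (h.commute (e 0) (e 3) (by simp [e])) (h.commute (e 1) (e 3) le_rfl)
  obtain hi | hi | hi : (i : ℕ) = k ∨ (i : ℕ) = k + 1 ∨ (i : ℕ) = k + 2 := by omega
  · rwa [show i = e 0 from Fin.ext hi, show j = e 1 from Fin.ext (by simp [e]; omega)]
  · rwa [show i = e 1 from Fin.ext hi, show j = e 2 from Fin.ext (by simp [e]; omega)]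
  · rwa [show i = e 2 from Fin.ext hi, show j = e 3 from Fin.ext (by simp [e]; omega)]

theorem commute_apply (h : IsBraidFamily a) (hG : ⁅commutator G, commutator G⁆ = ⊥)
    (hm : 4 ≤ m) (i j : Fin m) : Commute (a i) (a j) := by
  obtain hij | hij | hij | hij | hij :
      (j : ℕ) + 2 ≤ i ∨ (j : ℕ) + 1 = i ∨ i = j ∨ (i : ℕ) + 1 = j ∨ (i : ℕ) + 2 ≤ j := by
    omega
  · exact (h.commute j i hij).symm
  · rw [h.apply_eq_apply_of_succ_eq hG hm hij]
  · rw [hij]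
  · rw [h.apply_eq_apply_of_succ_eq hG hm hij]
  · exact h.commute i j hij

theorem commutator_eq_bot (h : IsBraidFamily a) (hG : ⁅commutator G, commutator G⁆ = ⊥)
    (hm : 4 ≤ m) (hgen : Subgroup.closure (Set.range a) = ⊤) : commutator G = ⊥ :=
  commutator_eq_bot_of_closure_eq_top hgen <| by
    rintro _ ⟨i, rfl⟩ _ ⟨j, rfl⟩
    exact h.commute_apply hG hm i j

theorem commutator_commutator_eq (h : IsBraidFamily a) (hm : 4 ≤ m)
    (hgen : Subgroup.closure (Set.range a) = ⊤) :
    ⁅commutator G, commutator G⁆ = commutator G := by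
  set N := ⁅commutator G, commutator G⁆
  have hπ := QuotientGroup.mk'_surjective N
  have hQ : ⁅commutator (G ⧸ N), commutator (G ⧸ N)⁆ = ⊥ := by
    rw [← map_commutator_of_surjective hπ, ← Subgroup.map_commutator, Subgroup.map_eq_bot_iff,
      QuotientGroup.ker_mk']
  have hgenQ : Subgroup.closure (Set.range (QuotientGroup.mk' N ∘ a)) = ⊤ := by
    rw [Set.range_comp, ← MonoidHom.map_closure, hgen, Subgroup.map_top_of_surjective _ hπ]
  have hab := (h.map (QuotientGroup.mk' N)).commutator_eq_bot hQ hm hgenQ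
  rw [← map_commutator_of_surjective hπ, Subgroup.map_eq_bot_iff, QuotientGroup.ker_mk'] at hab
  exact le_antisymm (Subgroup.commutator_le_self _) hab

end IsBraidFamily

theorem isBraidFamily_braidGen (n : ℕ) : IsBraidFamily (braidGen n) where
  braid i j hij := by
    have h : PresentedGroup.mk (braidRels n)
        (.of i * .of j * .of i * (.of j * .of i * .of j)⁻¹) = 1 :=
      PresentedGroup.one_of_mem (Or.inl ⟨i, j, hij, rfl⟩)
    simp only [map_mul, map_inv] at h
    exact mul_inv_eq_one.1 h
  commute i j hij := by
    have h : PresentedGroup.mk (braidRels n) (.of i * .of j * (.of j * .of i)⁻¹) = 1 :=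
      PresentedGroup.one_of_mem (Or.inr ⟨i, j, hij, rfl⟩)
    simp only [map_mul, map_inv] at h
    exact mul_inv_eq_one.1 h

theorem closure_range_braidGen (n : ℕ) : Subgroup.closure (Set.range (braidGen n)) = ⊤ :=
  PresentedGroup.closure_range_of _

/-- For `n ≥ 5`, the commutator subgroup `[B_n, B_n]` of the braid group is perfect. -/
theorem braid_commutator_perfect (n : ℕ) (hn : 5 ≤ n) :
    ⁅commutator (BraidGroup n), commutator (BraidGroup n)⁆ = commutator (BraidGroup n) :=
  (isBraidFamily_braidGen n).commutator_commutator_eq (by omega) (closure_range_braidGen n)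
end

section
/- Let G be a group generated by elements τ_1, …, τ_n (indices in ℤ/nℤ) such that (1) the τ_i are all mutually conjugate in G, and (2) there exists k ≥ 1 such that τ_i and τ_j commute whenever the cyclic distance between i and j in ℤ/nℤ is at least k. If n ≥ 2k+1, then every group homomorphism f: G → GL(2,ℝ)⁺ (the group of 2×2 real matrices with positive determinant) has abelian image. -/
open scoped MatrixGroups

set_option maxHeartbeats 1000000
set_option synthInstance.maxHeartbeats 400000


private lemma aux_b {A B C : Matrix (Fin 2) (Fin 2) ℝ}
    (hb : A 0 1 ≠ 0) (hAB : A * B = B * A) (hAC : A * C = C * A) : B * C = C * B := by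
  have b00 := congrFun (congrFun hAB 0) 0
  have b01 := congrFun (congrFun hAB 0) 1
  have c00 := congrFun (congrFun hAC 0) 0
  have c01 := congrFun (congrFun hAC 0) 1
  simp only [Matrix.mul_apply, Fin.sum_univ_two] at b00 b01 c00 c01
  have hB1 : A 0 1 * B 1 0 = B 0 1 * A 1 0 := by linear_combination b00
  have hC1 : A 0 1 * C 1 0 = C 0 1 * A 1 0 := by linear_combination c00
  ext i j
  fin_cases i <;> fin_cases j <;>
    simp only [Matrix.mul_apply, Fin.sum_univ_two, Fin.mk_zero, Fin.mk_one]
  · refine mul_right_cancel₀ hb ?_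
    linear_combination B 0 1 * hC1 - C 0 1 * hB1
  · refine mul_right_cancel₀ hb ?_
    linear_combination B 0 1 * c01 - C 0 1 * b01
  · refine mul_right_cancel₀ (mul_ne_zero hb hb) ?_
    linear_combination A 0 1 * (C 0 0 - C 1 1) * hB1 + A 0 1 * (B 1 1 - B 0 0) * hC1
      + A 1 0 * (C 0 1 * b01 - B 0 1 * c01)
  · refine mul_right_cancel₀ hb ?_
    linear_combination C 0 1 * hB1 - B 0 1 * hC1

lemma aux_centralizer_comm {A B C : Matrix (Fin 2) (Fin 2) ℝ}
    (hA : ¬ ∃ r : ℝ, A = r • (1 : Matrix (Fin 2) (Fin 2) ℝ))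
    (hAB : A * B = B * A) (hAC : A * C = C * A) : B * C = C * B := by
  by_cases hb : A 0 1 ≠ 0
  · exact aux_b hb hAB hAC
  by_cases hc : A 1 0 ≠ 0
  · have hb' : A.transpose 0 1 ≠ 0 := hc
    have h := aux_b (B := C.transpose) (C := B.transpose) hb'
      (by rw [← Matrix.transpose_mul, ← Matrix.transpose_mul, hAC])
      (by rw [← Matrix.transpose_mul, ← Matrix.transpose_mul, hAB])
    have h2 := congrArg Matrix.transpose h
    simpa [Matrix.transpose_mul] using h2
  push_neg at hb hc
  have had : A 0 0 ≠ A 1 1 := by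
    by_contra h3
    exact hA ⟨A 0 0, by ext i j; fin_cases i <;> fin_cases j <;>
      simp [Matrix.one_apply, hb, hc, h3.symm]⟩
  have b01 := congrFun (congrFun hAB 0) 1
  have b10 := congrFun (congrFun hAB 1) 0
  have c01 := congrFun (congrFun hAC 0) 1
  have c10 := congrFun (congrFun hAC 1) 0
  simp only [Matrix.mul_apply, Fin.sum_univ_two, hb, hc, zero_mul, mul_zero,
    add_zero, zero_add] at b01 b10 c01 c10
  have hd : A 0 0 - A 1 1 ≠ 0 := sub_ne_zero.mpr had
  have hB01 : B 0 1 = 0 := by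
    have h4 : B 0 1 * (A 0 0 - A 1 1) = 0 := by linear_combination b01
    exact (mul_eq_zero.mp h4).resolve_right hd
  have hB10 : B 1 0 = 0 := by
    have h4 : B 1 0 * (A 0 0 - A 1 1) = 0 := by linear_combination -b10
    exact (mul_eq_zero.mp h4).resolve_right hd
  have hC01 : C 0 1 = 0 := by
    have h4 : C 0 1 * (A 0 0 - A 1 1) = 0 := by linear_combination c01
    exact (mul_eq_zero.mp h4).resolve_right hd
  have hC10 : C 1 0 = 0 := by
    have h4 : C 1 0 * (A 0 0 - A 1 1) = 0 := by linear_combination -c10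
    exact (mul_eq_zero.mp h4).resolve_right hd
  ext i j
  fin_cases i <;> fin_cases j <;>
    simp [Matrix.mul_apply, Fin.sum_univ_two, hB01, hB10, hC01, hC10, mul_comm]



/-- Let `G` be generated by mutually conjugate elements `τ_1, …, τ_n` (indices in `ℤ/nℤ`) such
that `τ_i` and `τ_j` commute whenever the cyclic distance between `i` and `j` is at least `k`.
If `n ≥ 2k+1` then every homomorphism `G → GL(2,ℝ)⁺` has abelian image. -/
theorem abelian_image_of_cyclic_generators {G : Type*} [Group G] (n k : ℕ) (hk : 1 ≤ k)
    (hn : 2 * k + 1 ≤ n) (τ : ZMod n → G)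
    (hgen : Subgroup.closure (Set.range τ) = ⊤)
    (hconj : ∀ i j : ZMod n, IsConj (τ i) (τ j))
    (hcomm : ∀ i j : ZMod n, k ≤ min (i - j).val (j - i).val → Commute (τ i) (τ j))
    (f : G →* GL(2, ℝ)⁺) :
    ∀ x y : G, Commute (f x) (f y) := by
  haveI : NeZero n := ⟨by omega⟩
  set Φ : GL(2, ℝ)⁺ →* Matrix (Fin 2) (Fin 2) ℝ :=
    (Units.coeHom (Matrix (Fin 2) (Fin 2) ℝ)).comp (Subgroup.subtype _) with hΦ
  have hΦinj : Function.Injective Φ := fun x y h => Subtype.ext (Units.ext h)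
  set M : ZMod n → Matrix (Fin 2) (Fin 2) ℝ := fun i => Φ (f (τ i)) with hM
  -- lifted commutation
  have hMcomm : ∀ i j : ZMod n, k ≤ min (i - j).val (j - i).val → M i * M j = M j * M i := by
    intro i j h
    have := congrArg (fun g => Φ (f g)) (hcomm i j h)
    simpa [map_mul] using this
  -- conjugation at matrix level
  have hconjM : ∀ i j : ZMod n, ∃ U V : Matrix (Fin 2) (Fin 2) ℝ,
      U * V = 1 ∧ U * M i * V = M j := by
    intro i j
    obtain ⟨u, hu⟩ := isConj_iff.mp (f.map_isConj (hconj i j))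
    refine ⟨Φ u, Φ u⁻¹, ?_, ?_⟩
    · rw [← map_mul, mul_inv_cancel, map_one]
    · have := congrArg Φ hu
      simpa [map_mul] using this
  -- val computations
  have hvk : ((k : ℕ) : ZMod n).val = k := ZMod.val_cast_of_lt (by omega)
  have hvk1 : (((k+1 : ℕ)) : ZMod n).val = k + 1 := ZMod.val_cast_of_lt (by omega)
  have hkne : ((k : ℕ) : ZMod n) ≠ 0 := by
    intro h; rw [h] at hvk; simp [ZMod.val_zero] at hvk; omega
  have hk1ne : (((k+1 : ℕ)) : ZMod n) ≠ 0 := by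
    intro h; rw [h] at hvk1; simp [ZMod.val_zero] at hvk1
  have hnegk : (-((k : ℕ) : ZMod n)).val = n - k := by
    rw [ZMod.neg_val, if_neg hkne, hvk]
  have hnegk1 : (-(((k+1 : ℕ)) : ZMod n)).val = n - (k+1) := by
    rw [ZMod.neg_val, if_neg hk1ne, hvk1]
  -- commutation at distance k and k+1
  have hck : ∀ i : ZMod n, M i * M (i + (k:ℕ)) = M (i + (k:ℕ)) * M i := by
    intro i
    apply hMcomm
    have e1 : i - (i + (k:ℕ)) = -((k:ℕ) : ZMod n) := by ring
    have e2 : (i + (k:ℕ)) - i = ((k:ℕ) : ZMod n) := by ring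
    rw [e1, e2, hnegk, hvk]
    omega
  have hck1 : ∀ i : ZMod n, M i * M (i + ((k+1:ℕ))) = M (i + ((k+1:ℕ))) * M i := by
    intro i
    apply hMcomm
    have e1 : i - (i + ((k+1:ℕ))) = -(((k+1:ℕ)) : ZMod n) := by ring
    have e2 : (i + ((k+1:ℕ))) - i = (((k+1:ℕ)) : ZMod n) := by ring
    rw [e1, e2, hnegk1, hvk1]
    omega
  -- main matrix commutation
  have allM : ∀ i j : ZMod n, M i * M j = M j * M i := by
    by_cases hs : ∃ r : ℝ, M 0 = r • (1 : Matrix (Fin 2) (Fin 2) ℝ)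
    · -- scalar case: all M i equal r • 1
      obtain ⟨r, hr⟩ := hs
      have hall : ∀ i : ZMod n, M i = r • 1 := by
        intro i
        obtain ⟨U, V, hUV, hC⟩ := hconjM 0 i
        rw [hr] at hC
        rw [← hC, Matrix.mul_smul, Matrix.smul_mul, mul_one, hUV]
      intro i j; rw [hall i, hall j]
    · -- nonscalar case
      have hns : ∀ i : ZMod n, ¬ ∃ r : ℝ, M i = r • (1 : Matrix (Fin 2) (Fin 2) ℝ) := by
        intro i ⟨r, hr⟩
        obtain ⟨U, V, hUV, hC⟩ := hconjM i 0
        rw [hr] at hC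
        exact hs ⟨r, by rw [← hC, Matrix.mul_smul, Matrix.smul_mul, mul_one, hUV]⟩
      -- adjacent indices commute
      have hadj : ∀ j : ZMod n, M j * M (j + 1) = M (j + 1) * M j := by
        intro j
        have h1 := hck (j - (k:ℕ))
        have h2 := hck1 (j - (k:ℕ))
        have e1 : j - (k:ℕ) + (k:ℕ) = j := by ring
        have e2 : j - (k:ℕ) + ((k+1:ℕ)) = j + 1 := by push_cast; ring
        rw [e1] at h1
        rw [e2] at h2
        exact aux_centralizer_comm (hns (j - (k:ℕ))) h1 h2
      -- induction along the cycle
      have key : ∀ (j : ZMod n) (m : ℕ), M j * M (j + (m:ℕ)) = M (j + (m:ℕ)) * M j := by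
        intro j m
        induction m with
        | zero => simp
        | succ m ih =>
          have e : j + ((m+1 : ℕ) : ZMod n) = (j + (m:ℕ)) + 1 := by push_cast; ring
          rw [e]
          exact aux_centralizer_comm (hns (j + (m:ℕ))) ih.symm (hadj (j + (m:ℕ)))
      intro i j
      have := key i ((j - i).val)
      rwa [ZMod.natCast_rightInverse (j - i), add_sub_cancel] at this
  -- back to GL(2,ℝ)⁺
  have key2 : ∀ i j : ZMod n, Commute (f (τ i)) (f (τ j)) := by
    intro i j
    have : Φ (f (τ i) * f (τ j)) = Φ (f (τ j) * f (τ i)) := by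
      rw [map_mul, map_mul]; exact allM i j
    exact hΦinj this
  -- closure induction
  intro x y
  have hx : x ∈ Subgroup.closure (Set.range τ) := hgen ▸ Subgroup.mem_top x
  have hy : y ∈ Subgroup.closure (Set.range τ) := hgen ▸ Subgroup.mem_top y
  refine Subgroup.closure_induction₂ (p := fun a b _ _ => Commute (f a) (f b))
    ?_ ?_ ?_ ?_ ?_ ?_ ?_ hx hy
  · rintro a b ⟨i, rfl⟩ ⟨j, rfl⟩ 
    exact key2 i j
  · intro x hx; rw [map_one]; exact Commute.one_left _
  · intro x hx; rw [map_one]; exact Commute.one_right _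
  · intro a b c ha hb hc h1 h2; rw [map_mul]; exact h1.mul_left h2
  · intro a b c ha hb hc h1 h2; rw [map_mul]; exact h1.mul_right h2
  · intro a b ha hb h; rw [map_inv]; exact h.inv_left
  · intro a b ha hb h; rw [map_inv]; exact h.inv_right
end

section
/- For n ≥ 5, every group homomorphism f: B_n → GL(2,ℝ)⁺ from the braid group B_n to the group of 2×2 real matrices with positive determinant has abelian image. -/
open scoped MatrixGroups


open scoped MatrixGroups

private abbrev M2' := Matrix (Fin 2) (Fin 2) ℝ

private def Scal (m : M2') : Prop := m 0 1 = 0 ∧ m 1 0 = 0 ∧ m 0 0 = m 1 1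

private lemma entry_eqs {A N : M2'} (h : A * N = N * A) :
    A 0 1 * N 1 0 = A 1 0 * N 0 1 ∧
    (A 0 0 - A 1 1) * N 0 1 = A 0 1 * (N 0 0 - N 1 1) ∧
    (A 0 0 - A 1 1) * N 1 0 = A 1 0 * (N 0 0 - N 1 1) := by
  have h00 := congrFun (congrFun h 0) 0
  have h01 := congrFun (congrFun h 0) 1
  have h10 := congrFun (congrFun h 1) 0
  simp only [Matrix.mul_apply, Fin.sum_univ_two] at h00 h01 h10
  refine ⟨by linear_combination h00, by linear_combination h01, by linear_combination -h10⟩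

private lemma mem_span {A N : M2'} (hA : ¬ Scal A) (h : A * N = N * A) :
    ∃ α β : ℝ, N = α • (1 : M2') + β • A := by
  obtain ⟨E1, E2, E3⟩ := entry_eqs h
  rw [Scal, not_and_or, not_and_or] at hA
  rcases hA with hb | hc | he
  · refine ⟨N 0 0 - A 0 0 * N 0 1 / A 0 1, N 0 1 / A 0 1, ?_⟩
    ext i j
    fin_cases i <;> fin_cases j <;>
      simp only [Matrix.add_apply, Matrix.smul_apply, Matrix.one_apply, smul_eq_mul] <;>
      norm_num <;> field_simp <;>
      first
        | linear_combination E1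
        | linear_combination E2
        | linear_combination E3
        | ring
  · refine ⟨N 0 0 - A 0 0 * N 1 0 / A 1 0, N 1 0 / A 1 0, ?_⟩
    ext i j
    fin_cases i <;> fin_cases j <;>
      simp only [Matrix.add_apply, Matrix.smul_apply, Matrix.one_apply, smul_eq_mul] <;>
      norm_num <;> field_simp <;>
      first
        | linear_combination E1
        | linear_combination -E1
        | linear_combination E3
        | linear_combination -E3
        | ring
  · have he' : A 0 0 - A 1 1 ≠ 0 := sub_ne_zero.mpr he
    refine ⟨N 0 0 - A 0 0 * (N 0 0 - N 1 1) / (A 0 0 - A 1 1),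
      (N 0 0 - N 1 1) / (A 0 0 - A 1 1), ?_⟩
    ext i j
    fin_cases i <;> fin_cases j <;>
      simp only [Matrix.add_apply, Matrix.smul_apply, Matrix.one_apply, smul_eq_mul] <;>
      norm_num <;> field_simp <;>
      first
        | linear_combination E2
        | linear_combination -E2
        | linear_combination E3
        | linear_combination -E3
        | ring

private lemma key {A N P : M2'} (hA : ¬ Scal A)
    (h1 : A * N = N * A) (h2 : A * P = P * A) : N * P = P * N := by
  obtain ⟨α, β, rfl⟩ := mem_span hA h1
  obtain ⟨γ, δ, rfl⟩ := mem_span hA h2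
  simp only [add_mul, mul_add, Matrix.smul_mul, Matrix.mul_smul, smul_smul,
    one_mul, mul_one]
  module

private def mat (g : GL(2,ℝ)⁺) : M2' := ((g : GL (Fin 2) ℝ) : M2')

private lemma mat_mul (g h : GL(2,ℝ)⁺) : mat (g * h) = mat g * mat h := rfl

private lemma commute_of_mat {g h : GL(2,ℝ)⁺} (H : mat g * mat h = mat h * mat g) :
    Commute g h := by
  have : (g * h : GL(2,ℝ)⁺) = h * g := Subtype.ext (Units.ext H)
  exact this

private lemma scal_smul {m : M2'} (h : Scal m) : m = m 0 0 • (1 : M2') := by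
  ext i j
  fin_cases i <;> fin_cases j <;>
    simp [Matrix.one_apply, h.1, h.2.1, ← h.2.2]

private lemma commute_of_scal {g : GL(2,ℝ)⁺} (h : Scal (mat g)) (x : GL(2,ℝ)⁺) :
    Commute g x := by
  apply commute_of_mat
  rw [scal_smul h]
  simp [Matrix.smul_mul, Matrix.mul_smul]

private lemma braid_comm_eq {G : Type*} [Group G] {x y : G}
    (hb : x * y * x = y * x * y) (hc : Commute x y) : x = y := by
  have h1 : y * (x * x) = y * (y * x) := by
    calc y * (x * x) = y * x * x := by rw [mul_assoc]
    _ = x * y * x := by rw [hc.eq]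
    _ = y * x * y := hb
    _ = y * (x * y) := by rw [mul_assoc]
    _ = y * (y * x) := by rw [hc.eq]
  exact mul_right_cancel (mul_left_cancel h1)

/-- For `n ≥ 5`, every homomorphism from the braid group `B_n` to `GL(2,ℝ)⁺` has abelian
image. -/
theorem braid_to_GLPos_abelian (n : ℕ) (hn : 5 ≤ n) (f : BraidGroup n →* GL(2, ℝ)⁺) :
    ∀ x y : BraidGroup n, Commute (f x) (f y) := by
  have hm : 4 ≤ n - 1 := by omega
  let f' : PresentedGroup (braidRels n) →* GL(2, ℝ)⁺ := f
  let F : FreeGroup (Fin (n - 1)) →* GL(2, ℝ)⁺ := f'.comp (PresentedGroup.mk (braidRels n))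
  let A : Fin (n - 1) → GL(2, ℝ)⁺ := fun i => F (FreeGroup.of i)
  have hF : ∀ r ∈ braidRels n, F r = 1 := by
    intro r hr
    have h1 : (PresentedGroup.mk (braidRels n) r) = 1 :=
      (QuotientGroup.eq_one_iff r).mpr (Subgroup.subset_normalClosure hr)
    show f' (PresentedGroup.mk (braidRels n) r) = 1
    rw [h1, map_one]
  have hbraid : ∀ i j : Fin (n - 1), (i : ℕ) + 1 = (j : ℕ) →
      A i * A j * A i = A j * A i * A j := by
    intro i j hij
    have := hF _ (Or.inl ⟨i, j, hij, rfl⟩)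
    simpa only [map_mul, map_inv, mul_inv_eq_one] using this
  have hcomm : ∀ i j : Fin (n - 1), (i : ℕ) + 2 ≤ (j : ℕ) → Commute (A i) (A j) := by
    intro i j hij
    have := hF _ (Or.inr ⟨i, j, hij, rfl⟩)
    have h2 : A i * A j = A j * A i := by
      simpa only [map_mul, map_inv, mul_inv_eq_one] using this
    exact h2
  set i0 : Fin (n - 1) := ⟨0, by omega⟩ with hi0
  have hone : ∀ i : Fin (n - 1), A i = A i0 := by
    by_cases hsc : Scal (mat (A i0))
    · -- scalar case: A i0 is central, chain of braid relations forces all equal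
      have main : ∀ k, ∀ hk : k < n - 1, A ⟨k, hk⟩ = A i0 := by
        intro k
        induction k with
        | zero => intro hk; rfl
        | succ k ih =>
          intro hk
          have hk' : k < n - 1 := by omega
          have hb := hbraid ⟨k, hk'⟩ ⟨k + 1, hk⟩ rfl
          have hc : Commute (A ⟨k, hk'⟩) (A ⟨k + 1, hk⟩) := by
            rw [ih hk']; exact commute_of_scal hsc _
          exact (braid_comm_eq hb hc).symm.trans (ih hk')
      intro i; exact main i.1 i.2
    · -- nonscalar case
      set i1 : Fin (n - 1) := ⟨1, by omega⟩ with hi1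
      set i2 : Fin (n - 1) := ⟨2, by omega⟩ with hi2
      set i3 : Fin (n - 1) := ⟨3, by omega⟩ with hi3
      have h02 : Commute (A i0) (A i2) := hcomm i0 i2 (Nat.le_refl _)
      have h03 : Commute (A i0) (A i3) := hcomm i0 i3 (by exact Nat.le_succ _)
      have h13 : Commute (A i1) (A i3) := hcomm i1 i3 (Nat.le_refl _)
      have h23 : Commute (A i2) (A i3) := by
        apply commute_of_mat
        exact key hsc
          (by have := congrArg mat h02.eq; simpa only [mat_mul] using this)
          (by have := congrArg mat h03.eq; simpa only [mat_mul] using this)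
      have e23 : A i2 = A i3 := braid_comm_eq (hbraid i2 i3 rfl) h23
      have h12 : Commute (A i1) (A i2) := by rw [e23]; exact h13
      have e12 : A i1 = A i2 := braid_comm_eq (hbraid i1 i2 rfl) h12
      have h01 : Commute (A i0) (A i1) := by rw [e12]; exact h02
      have e01 : A i0 = A i1 := braid_comm_eq (hbraid i0 i1 rfl) h01
      have main : ∀ k, ∀ hk : k < n - 1, A ⟨k, hk⟩ = A i0 := by
        intro k
        induction k using Nat.strong_induction_on with
        | _ k ih =>
          match k with
          | 0 => intro hk; rfl
          | 1 => intro hk; exact e01.symm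
          | 2 => intro hk; exact (e01.trans e12).symm
          | 3 => intro hk; exact (e01.trans (e12.trans e23)).symm
          | (k + 4) =>
            intro hk
            have h2 : k + 2 < n - 1 := by omega
            have h3 : k + 3 < n - 1 := by omega
            have hcomm' : Commute (A ⟨k + 2, h2⟩) (A ⟨k + 4, hk⟩) := hcomm _ _ (Nat.le_refl _)
            have ihk3 : A ⟨k + 3, h3⟩ = A i0 := ih (k + 3) (by omega) h3
            have ihk2 : A ⟨k + 2, h2⟩ = A i0 := ih (k + 2) (by omega) h2
            have hc : Commute (A ⟨k + 3, h3⟩) (A ⟨k + 4, hk⟩) := by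
              rw [ihk3, ← ihk2]; exact hcomm'
            exact (braid_comm_eq (hbraid ⟨k + 3, h3⟩ ⟨k + 4, hk⟩ rfl) hc).symm.trans ihk3
      intro i; exact main i.1 i.2
  have hmem : ∀ x : BraidGroup n, f x ∈ Subgroup.zpowers (A i0) := by
    intro x
    refine PresentedGroup.generated_by (braidRels n)
      ((Subgroup.zpowers (A i0)).comap f') ?_ x
    intro j
    have : f' (PresentedGroup.of j) = A j := rfl
    rw [Subgroup.mem_comap, this, hone j]
    exact Subgroup.mem_zpowers _
  intro x y
  obtain ⟨kx, hx⟩ := hmem x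
  obtain ⟨ky, hy⟩ := hmem y
  rw [← hx, ← hy]
  exact (Commute.refl _).zpow_zpow kx ky
end

section
/- If H ≤ PSL(2,ℝ) is an abelian subgroup and G ≤ GL(2,ℝ)⁺ is the preimage of H under the natural projection GL(2,ℝ)⁺ → PSL(2,ℝ) (given by quotienting by positive scalar matrices and ±I), then G is abelian. -/
/-!
Lifts `A, B` of commuting elements of `PSL(2,ℝ)` commute up to a nonzero scalar, `AB = c • BA`,
and taking determinants gives `c = ±1`. The case `c = -1` cannot occur when `det A, det B > 0`:
anticommuting forces `A`, `B` and `AB` to be traceless, and on traceless `2 × 2` real matrices the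
determinant is a Lorentzian quadratic form of signature `(1, 2)` with polar form `-tr (AB) / 2`,
so `A` and `B` would be two orthogonal timelike vectors.
-/

open scoped MatrixGroups

/-- `PSL(2,ℝ) = SL(2,ℝ)/{±I}`. -/
abbrev PSL2R : Type :=
  Matrix.SpecialLinearGroup (Fin 2) ℝ ⧸ Subgroup.center (Matrix.SpecialLinearGroup (Fin 2) ℝ)

namespace Matrix

theorem trace_eq_zero_of_mul_eq_neg_mul {n K : Type*} [Fintype n] [DecidableEq n] [Field K]
    [CharZero K] {A B : Matrix n n K} (hB : IsUnit B) (h : A * B = -(B * A)) : A.trace = 0 := by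
  have hconj : B * A * B⁻¹ = -A := by
    rw [← neg_neg (B * A), ← h, neg_mul, Matrix.mul_assoc,
      mul_nonsing_inv _ ((isUnit_iff_isUnit_det B).mp hB), mul_one]
  have := congrArg trace hconj
  rw [trace_conj hB, trace_neg] at this
  exact self_eq_neg.mp this

theorem trace_mul_ne_zero_of_det_pos {A B : Matrix (Fin 2) (Fin 2) ℝ} (hA : 0 < A.det)
    (hB : 0 < B.det) (htA : A.trace = 0) (htB : B.trace = 0) : (A * B).trace ≠ 0 := by
  rw [trace_fin_two] at htA htB
  rw [det_fin_two, show A 1 1 = -A 0 0 by linarith] at hA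
  rw [det_fin_two, show B 1 1 = -B 0 0 by linarith] at hB
  rw [trace_fin_two]
  simp only [mul_apply, Fin.sum_univ_two, show A 1 1 = -A 0 0 by linarith,
    show B 1 1 = -B 0 0 by linarith]
  intro horth
  set p := A 0 0; set q := A 0 1; set r := A 1 0
  set x := B 0 0; set y := B 0 1; set w := B 1 0
  have hsq : (q * w + r * y) ^ 2 = 4 * p ^ 2 * x ^ 2 := by
    rw [show q * w + r * y = -(2 * p * x) by linarith]; ring
  -- `(qw + ry)² ≥ 4 (qr) (yw) > 4 p² x²`, since `-qr > p²` and `-yw > x²`.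
  nlinarith [sq_nonneg (q * w - r * y),
    mul_pos (show 0 < -q * r - p ^ 2 by linarith) (show 0 < -y * w by nlinarith),
    mul_nonneg (sq_nonneg p) (show 0 ≤ -y * w - x ^ 2 by linarith)]

theorem mul_ne_neg_mul_of_det_pos {A B : Matrix (Fin 2) (Fin 2) ℝ} (hA : 0 < A.det)
    (hB : 0 < B.det) : A * B ≠ -(B * A) := by
  intro h
  have htA := trace_eq_zero_of_mul_eq_neg_mul ((isUnit_iff_isUnit_det B).mpr hB.ne'.isUnit) h
  have htB := trace_eq_zero_of_mul_eq_neg_mul ((isUnit_iff_isUnit_det A).mpr hA.ne'.isUnit)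
    (by rw [h, neg_neg])
  have htAB : (A * B).trace = 0 := by
    have := congrArg trace h
    rw [trace_neg, trace_mul_comm B A] at this
    exact self_eq_neg.mp this
  exact trace_mul_ne_zero_of_det_pos hA hB htA htB htAB

theorem mul_eq_mul_of_mul_eq_smul_mul {A B : Matrix (Fin 2) (Fin 2) ℝ} (hA : 0 < A.det)
    (hB : 0 < B.det) {c : ℝ} (h : A * B = c • (B * A)) : A * B = B * A := by
  have hc : c ^ 2 = 1 := by
    have hdet := congrArg det h
    rw [det_smul, det_mul, det_mul, Fintype.card_fin, mul_comm B.det] at hdet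
    exact (mul_eq_right₀ (mul_pos hA hB).ne').mp hdet.symm
  rcases sq_eq_one_iff.mp hc with rfl | rfl
  · rwa [one_smul] at h
  · exact absurd (by rwa [neg_one_smul] at h) (mul_ne_neg_mul_of_det_pos hA hB)

end Matrix

theorem preimage_of_abelian_is_abelian_general (π : GL(2, ℝ)⁺ →* PSL2R)
    (hker : ∀ g : GL(2, ℝ)⁺, π g = 1 ↔
      ∃ lam : ℝ, lam ≠ 0 ∧ ((g : GL (Fin 2) ℝ) : Matrix (Fin 2) (Fin 2) ℝ) = lam • 1)
    (H : Subgroup PSL2R) (hH : ∀ a b : H, a * b = b * a) :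
    ∀ a b : H.comap π, a * b = b * a := by
  rintro ⟨x, hx⟩ ⟨y, hy⟩
  have hcomm : π x * π y = π y * π x := congrArg Subtype.val (hH ⟨_, hx⟩ ⟨_, hy⟩)
  obtain ⟨c, -, hc⟩ := (hker (x * y * (y * x)⁻¹)).mp (by simp [hcomm])
  have hlift : (((x * y : GL(2, ℝ)⁺) : GL (Fin 2) ℝ) : Matrix (Fin 2) (Fin 2) ℝ)
      = c • (((y * x : GL(2, ℝ)⁺) : GL (Fin 2) ℝ) : Matrix (Fin 2) (Fin 2) ℝ) := by
    conv_lhs => rw [← inv_mul_cancel_right (x * y) (y * x)]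
    rw [Subgroup.coe_mul, Units.val_mul, hc, smul_one_mul]
  apply Subtype.ext; apply Subtype.ext; apply Units.ext
  simpa using Matrix.mul_eq_mul_of_mul_eq_smul_mul ((Matrix.mem_glpos _).mp x.2)
    ((Matrix.mem_glpos _).mp y.2) (by simpa using hlift)

/-- If `H ≤ PSL(2,ℝ)` is an abelian subgroup and `G ≤ GL(2,ℝ)⁺` is its preimage under the
natural projection `GL(2,ℝ)⁺ → PSL(2,ℝ)` (a surjection whose kernel consists of the nonzero
scalar matrices `λI`), then `G` is abelian. -/
theorem preimage_of_abelian_is_abelian (π : GL(2, ℝ)⁺ →* PSL2R)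
    (hsurj : Function.Surjective π)
    (hker : ∀ g : GL(2, ℝ)⁺, π g = 1 ↔
      ∃ lam : ℝ, lam ≠ 0 ∧ ((g : GL (Fin 2) ℝ) : Matrix (Fin 2) (Fin 2) ℝ) = lam • 1)
    (H : Subgroup PSL2R) (hH : ∀ a b : H, a * b = b * a) :
    ∀ a b : H.comap π, a * b = b * a :=
  preimage_of_abelian_is_abelian_general π hker H hH
end
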